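/- For d ≥ 2, Z ≠ 0, k ≥ 0, n ≥ 0 and any degree-n solid harmonic Y, the function u(x) = L_k^{(2n+d-2)}(κ|x|) e^{-κ|x|/2} Y(κx) with κ = 4|Z|/(2n+2k+d-1) satisfies the Schrödinger equation with Coulomb potential: (-½Δ - |Z|/|x|) u(x) = -2Z²/(2n+2k+d-1)² · u(x) for x ≠ 0. -/

import Mathlib

open MeasureTheory Real

/-- Generalized Laguerre polynomial `L_k^{(α)}(z) = ∑_{j=0}^k (α+j+1)_{k-j}/((k-j)! j!) (-z)^j`. -/
noncomputable def laguerre (α : ℝ) (k : ℕ) (z : ℝ) : ℝ :=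
  ∑ j ∈ Finset.range (k + 1),
    Real.Gamma (α + k + 1) /
      (Real.Gamma (α + j + 1) * ((k - j).factorial : ℝ) * (j.factorial : ℝ)) * (-z) ^ j

/-- The Laplacian of `f : ℝ^d → ℝ`, as the trace of the second derivative. -/
noncomputable def lap {d : ℕ} (f : EuclideanSpace ℝ (Fin d) → ℝ)
    (x : EuclideanSpace ℝ (Fin d)) : ℝ :=
  ∑ i : Fin d, iteratedFDeriv ℝ 2 f x ![EuclideanSpace.single i 1, EuclideanSpace.single i 1]

/-- Evaluation of a multivariate polynomial as a function on `ℝ^d`. -/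
noncomputable def pEval {d : ℕ} (P : MvPolynomial (Fin d) ℝ)
    (x : EuclideanSpace ℝ (Fin d)) : ℝ :=
  MvPolynomial.eval (fun i => x i) P

/-!
Homogeneity gives `P(κx) = κⁿ P(x)`, so the function is `f(|x|) P(x)` with the radial profile
`f(r) = κⁿ L(κr) e^{-κr/2}`, `L = L_k^{(α)}`, `α = 2n + d - 2`. The product rule for the
Laplacian, the radial Laplacian `f'' + (d - 1) f' / r` and Euler's identity `⟪x, ∇P x⟫ = n P x`
give `Δ(f(|x|) P(x)) = (f'' + (α + 1) f' / r) P` for harmonic `P`. Laguerre's equation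
`z L'' + (α + 1 - z) L' + k L = 0`, which on coefficients is the recurrence
`(j + 1)(α + j + 1) c_{j+1} = -(k - j) c_j`, turns this into
`(κ² / 4 - κ (2k + α + 1) / (2r)) f P`; with `κ = 4|Z| / (2k + α + 1)` the `1/r` term is exactly
the Coulomb potential, leaving the eigenvalue `-κ² / 8`.
-/

open Topology

theorem hasFDerivAt_norm_of_ne_zero {F : Type*} [NormedAddCommGroup F] [InnerProductSpace ℝ F]
    {y : F} (hy : y ≠ 0) : HasFDerivAt (‖·‖) (‖y‖⁻¹ • innerSL ℝ y) y := by
  have hy' : ‖y‖ ≠ 0 := norm_ne_zero_iff.mpr hy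
  have H := (hasStrictFDerivAt_norm_sq y).hasFDerivAt.sqrt (pow_ne_zero 2 hy')
  simp only [Real.sqrt_sq (norm_nonneg _)] at H
  convert H using 1
  ext v
  simp
  field_simp

theorem fderiv_comp_norm {F : Type*} [NormedAddCommGroup F] [InnerProductSpace ℝ F] {f : ℝ → ℝ}
    {y : F} (hf : DifferentiableAt ℝ f ‖y‖) (hy : y ≠ 0) :
    fderiv ℝ (fun z => f ‖z‖) y = (deriv f ‖y‖ * ‖y‖⁻¹) • innerSL ℝ y :=
  (hf.hasDerivAt.comp_hasFDerivAt y (hasFDerivAt_norm_of_ne_zero hy)).fderiv.trans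
    (mul_smul _ _ _).symm

theorem sum_mul_apply_single {d : ℕ} (L : EuclideanSpace ℝ (Fin d) →L[ℝ] ℝ)
    (x : EuclideanSpace ℝ (Fin d)) : ∑ i, x i * L (EuclideanSpace.single i 1) = L x := by
  conv_rhs => rw [← (EuclideanSpace.basisFun (Fin d) ℝ).sum_repr x]
  simp [map_sum]

section Laplacian

variable {d : ℕ} {x : EuclideanSpace ℝ (Fin d)}

theorem lap_eq_sum_fderiv_fderiv (f : EuclideanSpace ℝ (Fin d) → ℝ)
    (x : EuclideanSpace ℝ (Fin d)) :
    lap f x =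
      ∑ i, fderiv ℝ (fderiv ℝ f) x (EuclideanSpace.single i 1) (EuclideanSpace.single i 1) := by
  simp [lap, iteratedFDeriv_two_apply]

theorem lap_mul {u v : EuclideanSpace ℝ (Fin d) → ℝ} (hu : ContDiffAt ℝ 2 u x)
    (hv : ContDiffAt ℝ 2 v x) :
    lap (fun y => u y * v y) x =
      lap u x * v x
        + 2 * ∑ i, fderiv ℝ u x (EuclideanSpace.single i 1)
            * fderiv ℝ v x (EuclideanSpace.single i 1)
        + u x * lap v x := by
  have hfderiv : fderiv ℝ (fun y => u y * v y) =ᶠ[𝓝 x]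
      fun y => u y • fderiv ℝ v y + v y • fderiv ℝ u y := by
    filter_upwards [hu.eventually (by simp), hv.eventually (by simp)] with y huy hvy
    exact fderiv_mul (huy.differentiableAt two_ne_zero) (hvy.differentiableAt two_ne_zero)
  have hu' := (hu.fderiv_right (m := 1) le_rfl).differentiableAt one_ne_zero
  have hv' := (hv.fderiv_right (m := 1) le_rfl).differentiableAt one_ne_zero
  have H := ((hu.differentiableAt two_ne_zero).hasFDerivAt.fun_smul hv'.hasFDerivAt).fun_add
    ((hv.differentiableAt two_ne_zero).hasFDerivAt.fun_smul hu'.hasFDerivAt)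
  simp only [lap_eq_sum_fderiv_fderiv, hfderiv.fderiv_eq, H.fderiv, add_apply, smul_apply,
    ContinuousLinearMap.smulRight_apply, smul_eq_mul, Finset.mul_sum, Finset.sum_mul,
    ← Finset.sum_add_distrib]
  exact Finset.sum_congr rfl fun i _ => by ring

theorem lap_comp_norm {f : ℝ → ℝ} (hf : ContDiff ℝ 2 f) (hx : x ≠ 0) :
    lap (fun y => f ‖y‖) x = deriv (deriv f) ‖x‖ + (d - 1) / ‖x‖ * deriv f ‖x‖ := by
  have hr : ‖x‖ ≠ 0 := norm_ne_zero_iff.mpr hx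
  have hf1 : Differentiable ℝ f := hf.differentiable two_ne_zero
  have hf2 : Differentiable ℝ (deriv f) := (hf.iterate_deriv' 1 1).differentiable (by norm_num)
  have hfderiv : fderiv ℝ (fun y => f ‖y‖) =ᶠ[𝓝 x]
      fun y => (deriv f ‖y‖ * ‖y‖⁻¹) • innerSL ℝ y := by
    filter_upwards [isOpen_ne.mem_nhds hx] with y hy
    exact fderiv_comp_norm (hf1 _) hy
  have H : HasFDerivAt (fun y : EuclideanSpace ℝ (Fin d) => (deriv f ‖y‖ * ‖y‖⁻¹) • innerSL ℝ y)
      _ x :=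
    (((hf2 _).hasDerivAt.fun_mul (hasDerivAt_inv hr)).comp_hasFDerivAt x
      (hasFDerivAt_norm_of_ne_zero hx)).fun_smul (innerSL ℝ).hasFDerivAt
  calc lap (fun y => f ‖y‖) x
      = ∑ i, (deriv f ‖x‖ * ‖x‖⁻¹
          + (deriv (deriv f) ‖x‖ * ‖x‖⁻¹ - deriv f ‖x‖ * (‖x‖ ^ 2)⁻¹) * ‖x‖⁻¹ * x i ^ 2) := by
        rw [lap_eq_sum_fderiv_fderiv, hfderiv.fderiv_eq, H.fderiv]
        refine Finset.sum_congr rfl fun i _ => ?_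
        simp [EuclideanSpace.inner_single_right]
        rw [innerSL_apply_apply]
        simp
        ring
    _ = d * (deriv f ‖x‖ * ‖x‖⁻¹)
          + (deriv (deriv f) ‖x‖ * ‖x‖⁻¹ - deriv f ‖x‖ * (‖x‖ ^ 2)⁻¹) * ‖x‖⁻¹ * ‖x‖ ^ 2 := by
        rw [Finset.sum_add_distrib, Finset.sum_const, ← Finset.mul_sum,
          ← EuclideanSpace.real_norm_sq_eq]
        simp
    _ = deriv (deriv f) ‖x‖ + (d - 1) / ‖x‖ * deriv f ‖x‖ := by
        field_simp
        ring

end Laplacian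

theorem contDiff_pEval {d : ℕ} (P : MvPolynomial (Fin d) ℝ) {m : WithTop ℕ∞} :
    ContDiff ℝ m (pEval P) := by
  have : pEval P = fun x : EuclideanSpace ℝ (Fin d) =>
      ∑ s ∈ P.support, P.coeff s * ∏ i, x i ^ s i := funext fun x => MvPolynomial.eval_eq' _ _
  rw [this]
  fun_prop

namespace MvPolynomial.IsHomogeneous

variable {d n : ℕ} {P : MvPolynomial (Fin d) ℝ}

theorem pEval_smul (hP : P.IsHomogeneous n) (c : ℝ) (y : EuclideanSpace ℝ (Fin d)) :
    pEval P (c • y) = c ^ n * pEval P y := by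
  simp only [pEval, MvPolynomial.eval_eq', Finset.mul_sum]
  refine Finset.sum_congr rfl fun s hs => ?_
  have hdeg : ∑ i, s i = n := by
    simpa [Finsupp.weight_apply, Finsupp.sum_fintype] using hP (mem_support_iff.mp hs)
  simp only [PiLp.smul_apply, smul_eq_mul, mul_pow, Finset.prod_mul_distrib,
    Finset.prod_pow_eq_pow_sum, hdeg]
  ring

theorem fderiv_pEval_self (hP : P.IsHomogeneous n) (x : EuclideanSpace ℝ (Fin d)) :
    fderiv ℝ (pEval P) x x = n * pEval P x := by
  have hline : HasDerivAt (fun t : ℝ => pEval P (t • x)) (fderiv ℝ (pEval P) x x) 1 := by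
    have hsmul : HasDerivAt (fun t : ℝ => t • x) x 1 := by
      simpa using (hasDerivAt_id (1 : ℝ)).smul_const x
    exact ((contDiff_pEval P (m := 1)).differentiable one_ne_zero _).hasFDerivAt
      |>.comp_hasDerivAt_of_eq 1 hsmul (one_smul ℝ x).symm
  have hpow : HasDerivAt (fun t : ℝ => t ^ n * pEval P x) (n * pEval P x) 1 := by
    simpa using (hasDerivAt_pow n (1 : ℝ)).mul_const (pEval P x)
  simp only [hP.pEval_smul] at hline
  exact hline.unique hpow

theorem lap_radial_mul_pEval (hP : P.IsHomogeneous n) {f : ℝ → ℝ} (hf : ContDiff ℝ 2 f)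
    {x : EuclideanSpace ℝ (Fin d)} (hx : x ≠ 0) :
    lap (fun y => f ‖y‖ * pEval P y) x =
      (deriv (deriv f) ‖x‖ + (2 * n + d - 1) / ‖x‖ * deriv f ‖x‖) * pEval P x
        + f ‖x‖ * lap (pEval P) x := by
  have hradial : ContDiffAt ℝ 2 (fun y => f ‖y‖) x := hf.contDiffAt.comp x (contDiffAt_norm ℝ hx)
  have hcross : ∑ i, fderiv ℝ (fun y => f ‖y‖) x (EuclideanSpace.single i 1)
      * fderiv ℝ (pEval P) x (EuclideanSpace.single i 1) = deriv f ‖x‖ / ‖x‖ * (n * pEval P x) := by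
    rw [fderiv_comp_norm (hf.differentiable two_ne_zero _) hx, ← hP.fderiv_pEval_self,
      ← sum_mul_apply_single, Finset.mul_sum]
    refine Finset.sum_congr rfl fun i _ => ?_
    simp [EuclideanSpace.inner_single_right]
    ring
  rw [lap_mul hradial (contDiff_pEval P).contDiffAt, lap_comp_norm hf hx, hcross]
  field_simp
  ring

end MvPolynomial.IsHomogeneous

section Laguerre

open Polynomial

variable (α : ℝ) (k : ℕ)

noncomputable def laguerreCoeff (j : ℕ) : ℝ :=
  (-1) ^ j * Gamma (α + k + 1) / (Gamma (α + j + 1) * (k - j).factorial * j.factorial)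

noncomputable def laguerrePoly : ℝ[X] :=
  ∑ j ∈ Finset.range (k + 1), C (laguerreCoeff α k j) * X ^ j

theorem eval_laguerrePoly (z : ℝ) : (laguerrePoly α k).eval z = laguerre α k z := by
  simp only [laguerrePoly, laguerre, laguerreCoeff, eval_finsetSum, eval_mul, eval_C, eval_pow,
    eval_X]
  exact Finset.sum_congr rfl fun j _ => by rw [neg_pow]; ring

theorem coeff_laguerrePoly (j : ℕ) :
    (laguerrePoly α k).coeff j = if j ≤ k then laguerreCoeff α k j else 0 := by
  simp [laguerrePoly]

@[fun_prop]
theorem contDiff_laguerre {m : WithTop ℕ∞} : ContDiff ℝ m (laguerre α k) := by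
  have h : laguerre α k = fun z => aeval z (laguerrePoly α k) :=
    funext fun z => by rw [coe_aeval_eq_eval, eval_laguerrePoly]
  rw [h]
  exact (laguerrePoly α k).contDiff_aeval m

variable {α}

theorem laguerreCoeff_succ (hα : -1 < α) {m : ℕ} (hm : m < k) :
    (m + 1) * (α + m + 1) * laguerreCoeff α k (m + 1) = -((k - m) * laguerreCoeff α k m) := by
  have hpos : 0 < α + m + 1 := by linarith [(m.cast_nonneg : (0 : ℝ) ≤ m)]
  have hGamma : Gamma (α + (m + 1 : ℕ) + 1) = (α + m + 1) * Gamma (α + m + 1) := by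
    rw [← Gamma_add_one hpos.ne']
    push_cast
    ring_nf
  have hfac : (k - m).factorial = (k - m) * (k - (m + 1)).factorial := by
    rw [show k - m = k - (m + 1) + 1 by omega, Nat.factorial_succ]
  have hkm : ((k - m : ℕ) : ℝ) = k - m := Nat.cast_sub hm.le
  have := (Gamma_pos_of_pos hpos).ne'
  have : (k : ℝ) - m ≠ 0 := by rw [← hkm]; exact_mod_cast (Nat.sub_pos_of_lt hm).ne'
  simp only [laguerreCoeff, hGamma, hfac, Nat.factorial_succ, Nat.cast_mul, hkm, pow_succ]
  field_simp
  push_cast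
  ring

theorem laguerrePoly_coeff_recurrence (hα : -1 < α) (m : ℕ) :
    (m + 1) * (α + m + 1) * (laguerrePoly α k).coeff (m + 1)
      + (k - m) * (laguerrePoly α k).coeff m = 0 := by
  simp only [coeff_laguerrePoly]
  rcases lt_or_ge m k with hm | hm
  · simp [hm.le, Nat.succ_le_of_lt hm, laguerreCoeff_succ k hα hm]
  · rcases hm.eq_or_lt with rfl | hm
    · simp
    · simp [hm.not_ge, (hm.trans (Nat.lt_succ_self m)).not_ge]

theorem laguerrePoly_ode (hα : -1 < α) :
    X * derivative (derivative (laguerrePoly α k))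
      + (C (α + 1) - X) * derivative (laguerrePoly α k) + C (k : ℝ) * laguerrePoly α k = 0 := by
  ext m
  have hrec := laguerrePoly_coeff_recurrence k hα
  rcases m with _ | m
  · simpa [coeff_derivative, sub_mul, add_comm] using hrec 0
  · simp only [coeff_add, coeff_sub, coeff_X_mul, coeff_C_mul, sub_mul, coeff_derivative,
      coeff_zero]
    have := hrec (m + 1)
    push_cast at this ⊢
    linear_combination this

theorem deriv_eval_mul_exp (p : ℝ[X]) (κ : ℝ) :
    deriv (fun t => p.eval (κ * t) * exp (-κ * t / 2)) =
      fun t => (C κ * (derivative p - C (1 / 2) * p)).eval (κ * t) * exp (-κ * t / 2) := by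
  funext t
  have hlin : HasDerivAt (fun t => κ * t) κ t := by simpa using (hasDerivAt_id t).const_mul κ
  have hexp : HasDerivAt (fun t => -κ * t / 2) (-κ / 2) t := by
    simpa using ((hasDerivAt_id t).const_mul (-κ)).div_const 2
  refine (((p.hasDerivAt (κ * t)).comp t hlin).mul ((hasDerivAt_exp _).comp t hexp)).deriv.trans ?_
  simp
  ring

theorem laguerre_mul_exp_ode (hα : -1 < α) (κ t : ℝ) :
    t * deriv (deriv fun s => laguerre α k (κ * s) * exp (-κ * s / 2)) t
        + (α + 1) * deriv (fun s => laguerre α k (κ * s) * exp (-κ * s / 2)) t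
      = (κ ^ 2 * t / 4 - κ * (k + (α + 1) / 2)) * (laguerre α k (κ * t) * exp (-κ * t / 2)) := by
  have hode := congrArg (eval (κ * t)) (laguerrePoly_ode k hα)
  simp only [eval_add, eval_mul, eval_sub, eval_C, eval_X, eval_zero] at hode
  simp only [← eval_laguerrePoly]
  rw [deriv_eval_mul_exp, deriv_eval_mul_exp]
  simp only [eval_mul, eval_sub, eval_C, derivative_mul, derivative_C, derivative_sub, zero_mul,
    zero_add]
  linear_combination κ * exp (-κ * t / 2) * hode

theorem laguerre_mul_exp_coulomb (hα : -1 < α) {κ c r : ℝ} (hκ : κ * (2 * k + α + 1) = 4 * c)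
    (hr : r ≠ 0) :
    -(1 / 2) * (deriv (deriv fun s => laguerre α k (κ * s) * exp (-κ * s / 2)) r
          + (α + 1) / r * deriv (fun s => laguerre α k (κ * s) * exp (-κ * s / 2)) r)
        - c / r * (laguerre α k (κ * r) * exp (-κ * r / 2))
      = -(κ ^ 2 / 8) * (laguerre α k (κ * r) * exp (-κ * r / 2)) := by
  have hode := laguerre_mul_exp_ode k hα κ r
  generalize deriv (deriv fun s => laguerre α k (κ * s) * exp (-κ * s / 2)) r = g'' at hode ⊢
  generalize deriv (fun s => laguerre α k (κ * s) * exp (-κ * s / 2)) r = g' at hode ⊢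
  generalize laguerre α k (κ * r) * exp (-κ * r / 2) = g at hode ⊢
  field_simp
  linear_combination (-8) * hode + 4 * g * hκ

end Laguerre

theorem coulomb_schrodinger_eigenfunction_general (d : ℕ) (hd : 2 ≤ d) (Z : ℝ) (k n : ℕ)
    (P : MvPolynomial (Fin d) ℝ) (hhom : P.IsHomogeneous n)
    (hharm : ∀ x, lap (pEval P) x = 0) (x : EuclideanSpace ℝ (Fin d)) (hx : x ≠ 0) :
    -(1 / 2) * lap (fun y => laguerre (2 * (n : ℝ) + (d : ℝ) - 2) k
            ((4 * |Z| / (2 * n + 2 * k + (d : ℝ) - 1)) * ‖y‖) *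
          Real.exp (-(4 * |Z| / (2 * n + 2 * k + (d : ℝ) - 1)) * ‖y‖ / 2) *
          pEval P ((4 * |Z| / (2 * n + 2 * k + (d : ℝ) - 1)) • y)) x -
        |Z| / ‖x‖ * (laguerre (2 * (n : ℝ) + (d : ℝ) - 2) k
            ((4 * |Z| / (2 * n + 2 * k + (d : ℝ) - 1)) * ‖x‖) *
          Real.exp (-(4 * |Z| / (2 * n + 2 * k + (d : ℝ) - 1)) * ‖x‖ / 2) *
          pEval P ((4 * |Z| / (2 * n + 2 * k + (d : ℝ) - 1)) • x))
      = -(2 * Z ^ 2 / (2 * n + 2 * k + (d : ℝ) - 1) ^ 2) *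
          (laguerre (2 * (n : ℝ) + (d : ℝ) - 2) k
              ((4 * |Z| / (2 * n + 2 * k + (d : ℝ) - 1)) * ‖x‖) *
            Real.exp (-(4 * |Z| / (2 * n + 2 * k + (d : ℝ) - 1)) * ‖x‖ / 2) *
            pEval P ((4 * |Z| / (2 * n + 2 * k + (d : ℝ) - 1)) • x)) := by
  have hd' : (2 : ℝ) ≤ d := by exact_mod_cast hd
  have hB : (0 : ℝ) < 2 * n + 2 * k + d - 1 := by
    linarith [(n.cast_nonneg : (0 : ℝ) ≤ n), (k.cast_nonneg : (0 : ℝ) ≤ k)]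
  set κ := 4 * |Z| / (2 * n + 2 * k + (d : ℝ) - 1) with hκ
  set f : ℝ → ℝ := fun t => κ ^ n * (laguerre (2 * n + d - 2) k (κ * t) * exp (-κ * t / 2))
  have hu : (fun y => laguerre (2 * n + d - 2) k (κ * ‖y‖) * exp (-κ * ‖y‖ / 2) * pEval P (κ • y))
      = fun y => f ‖y‖ * pEval P y := by
    funext y
    rw [hhom.pEval_smul]
    ring
  rw [hu, hhom.lap_radial_mul_pEval (by fun_prop) hx, hharm x, hhom.pEval_smul]
  simp only [f, deriv_const_mul_field']
  have hrad := laguerre_mul_exp_coulomb k (α := 2 * n + d - 2) (κ := κ) (c := |Z|) (r := ‖x‖)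
    (by linarith [(n.cast_nonneg : (0 : ℝ) ≤ n)])
    (by rw [hκ, div_mul_eq_mul_div, div_eq_iff hB.ne']; ring)
    (norm_ne_zero_iff.mpr hx)
  have hκsq : κ ^ 2 / 8 = 2 * Z ^ 2 / (2 * n + 2 * k + (d : ℝ) - 1) ^ 2 := by
    rw [hκ, div_pow, ← sq_abs Z]
    ring
  rw [← hκsq]
  linear_combination κ ^ n * pEval P x * hrad

theorem coulomb_schrodinger_eigenfunction (d : ℕ) (hd : 2 ≤ d) (Z : ℝ) (hZ : Z ≠ 0) (k n : ℕ)
    (P : MvPolynomial (Fin d) ℝ) (hhom : P.IsHomogeneous n)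
    (hharm : ∀ x, lap (pEval P) x = 0) (x : EuclideanSpace ℝ (Fin d)) (hx : x ≠ 0) :
    -(1 / 2) * lap (fun y => laguerre (2 * (n : ℝ) + (d : ℝ) - 2) k
            ((4 * |Z| / (2 * n + 2 * k + (d : ℝ) - 1)) * ‖y‖) *
          Real.exp (-(4 * |Z| / (2 * n + 2 * k + (d : ℝ) - 1)) * ‖y‖ / 2) *
          pEval P ((4 * |Z| / (2 * n + 2 * k + (d : ℝ) - 1)) • y)) x -
        |Z| / ‖x‖ * (laguerre (2 * (n : ℝ) + (d : ℝ) - 2) k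
            ((4 * |Z| / (2 * n + 2 * k + (d : ℝ) - 1)) * ‖x‖) *
          Real.exp (-(4 * |Z| / (2 * n + 2 * k + (d : ℝ) - 1)) * ‖x‖ / 2) *
          pEval P ((4 * |Z| / (2 * n + 2 * k + (d : ℝ) - 1)) • x))
      = -(2 * Z ^ 2 / (2 * n + 2 * k + (d : ℝ) - 1) ^ 2) *
          (laguerre (2 * (n : ℝ) + (d : ℝ) - 2) k
              ((4 * |Z| / (2 * n + 2 * k + (d : ℝ) - 1)) * ‖x‖) *
            Real.exp (-(4 * |Z| / (2 * n + 2 * k + (d : ℝ) - 1)) * ‖x‖ / 2) *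
            pEval P ((4 * |Z| / (2 * n + 2 * k + (d : ℝ) - 1)) • x)) :=
  coulomb_schrodinger_eigenfunction_general d hd Z k n P hhom hharm x hx
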